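/- Let L/K be an isometric extension of non-Archimedean fields, V a finite-dimensional K-vector space, and N a non-Archimedean norm on V that is diagonalizable in a basis (e₁,…,e_d). Then the ground field extension N_L on V_L = L ⊗_K V is diagonalizable in the basis (1⊗e₁,…,1⊗e_d); explicitly, N_L(Σᵢ cᵢ·(1⊗eᵢ)) = maxᵢ |cᵢ|_L·N(eᵢ) for all c₁,…,c_d ∈ L. -/

import Mathlib

open scoped BigOperators

/-- A non-Archimedean norm on a `K`-vector space `V`. -/
def IsNAnorm (K : Type*) {V : Type*} [NormedField K] [AddCommGroup V] [Module K V]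
    (N : V → ℝ) : Prop :=
  (∀ v, 0 ≤ N v) ∧ (∀ v, N v = 0 ↔ v = 0) ∧
  (∀ (a : K) (v : V), N (a • v) = ‖a‖ * N v) ∧
  (∀ v w : V, N (v + w) ≤ max (N v) (N w))

/-- The sup-distance `d_∞` between two norms on `V`. -/
noncomputable def dInfty {V : Type*} [AddCommGroup V] (N N' : V → ℝ) : ℝ :=
  sSup {r | ∃ v : V, v ≠ 0 ∧ r = |Real.log (N' v) - Real.log (N v)|}

/-- The `i`-th relative spectral value `λᵢ(N, N')`:
the supremum, over subspaces `W ⊆ V` with `dim W ≥ i`, of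
`inf_{w ∈ W ∖ {0}} (log N'(w) − log N(w))`. -/
noncomputable def specVal (K : Type*) {V : Type*} [Field K] [AddCommGroup V] [Module K V]
    (N N' : V → ℝ) (i : ℕ) : ℝ :=
  sSup {r | ∃ W : Submodule K V, i ≤ Module.finrank K W ∧
    r = sInf {s | ∃ w ∈ W, w ≠ (0 : V) ∧ s = Real.log (N' w) - Real.log (N w)}}

/-- The relative volume `vol(N, N') = (1/d)·Σ_{i=1}^d λᵢ(N, N')`, where `d = dim V`. -/
noncomputable def relVol (K : Type*) (V : Type*) [Field K] [AddCommGroup V] [Module K V]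
    (N N' : V → ℝ) : ℝ :=
  (Module.finrank K V : ℝ)⁻¹ *
    ∑ i ∈ Finset.range (Module.finrank K V), specVal K N N' (i + 1)

open scoped TensorProduct

/-- The ground field extension of a norm `N` on `V` to `V_L = L ⊗_K V`. -/
noncomputable def groundFieldExt (K : Type*) {L V : Type*} [NormedField K] [NormedField L]
    [Algebra K L] [AddCommGroup V] [Module K V] (N : V → ℝ) (w : L ⊗[K] V) : ℝ :=
  sInf {r | ∃ (n : ℕ) (a : Fin (n + 1) → L) (v : Fin (n + 1) → V),
    w = ∑ j, a j ⊗ₜ[K] v j ∧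
    r = Finset.univ.sup' Finset.univ_nonempty fun j => ‖a j‖ * N (v j)}

/-!
Since `N` is diagonal in `b`, coordinates are controlled by the norm: `|b.repr v i| N(bᵢ) ≤ N(v)`.
For any representation `w = Σⱼ aⱼ ⊗ vⱼ`, the `i`-th coordinate of `w` in the basis `(1 ⊗ bᵢ)` is
`cᵢ = Σⱼ (b.repr vⱼ i) aⱼ`. By the ultrametric inequality in `L` and the isometry `K → L`,
`|cᵢ| ≤ |aⱼ| |b.repr vⱼ i|` for a single `j`, hence `|cᵢ| N(bᵢ) ≤ |aⱼ| N(vⱼ)`. So `maxᵢ |cᵢ| N(bᵢ)`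
bounds the cost of every representation from below, and `Σᵢ cᵢ ⊗ bᵢ` attains it.
-/

lemma Module.Basis.baseChange_repr_sum_tmul {R S M ι J : Type*} [CommSemiring R] [Semiring S]
    [Algebra R S] [AddCommMonoid M] [Module R M] (b : Module.Basis ι R M) (s : Finset J)
    (a : J → S) (v : J → M) (i : ι) :
    (b.baseChange S).repr (∑ j ∈ s, a j ⊗ₜ[R] v j) i = ∑ j ∈ s, b.repr (v j) i • a j := by
  simp [map_sum, Finsupp.finsetSum_apply]

section

variable {K L V ι : Type*} [NormedField K] [NormedField L] [Algebra K L]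
  [AddCommGroup V] [Module K V] [Fintype ι]

def IsDiagonalizableIn (N : V → ℝ) (b : Module.Basis ι K V) : Prop :=
  ∀ a : ι → K, N (∑ i, a i • b i) = ⨆ i, ‖a i‖ * N (b i)

lemma IsDiagonalizableIn.norm_repr_mul_le {N : V → ℝ} {b : Module.Basis ι K V}
    (hdiag : IsDiagonalizableIn N b) (v : V) (i : ι) : ‖b.repr v i‖ * N (b i) ≤ N v := by
  rw [← b.sum_repr v, hdiag, b.sum_repr v]
  exact le_ciSup (Set.finite_range fun i => ‖b.repr v i‖ * N (b i)).bddAbove i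

variable [IsUltrametricDist L]

lemma norm_baseChange_repr_mul_le_sup' {J : Type*} [Fintype J] [Nonempty J]
    (hisom : ∀ x : K, ‖algebraMap K L x‖ = ‖x‖) {N : V → ℝ} {b : Module.Basis ι K V}
    (hb : ∀ i, 0 ≤ N (b i)) (hdiag : IsDiagonalizableIn N b) (a : J → L) (v : J → V) (i : ι) :
    ‖(b.baseChange L).repr (∑ j, a j ⊗ₜ[K] v j) i‖ * N (b i) ≤
      Finset.univ.sup' Finset.univ_nonempty fun j => ‖a j‖ * N (v j) := by
  obtain ⟨j, -, hj⟩ := IsUltrametricDist.exists_norm_finsetSum_le_of_nonempty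
    Finset.univ_nonempty fun j => b.repr (v j) i • a j
  calc ‖(b.baseChange L).repr (∑ j, a j ⊗ₜ[K] v j) i‖ * N (b i)
      ≤ ‖b.repr (v j) i • a j‖ * N (b i) := by
        rw [b.baseChange_repr_sum_tmul]
        exact mul_le_mul_of_nonneg_right hj (hb i)
    _ = ‖a j‖ * (‖b.repr (v j) i‖ * N (b i)) := by
        rw [Algebra.smul_def, norm_mul, hisom]; ring
    _ ≤ ‖a j‖ * N (v j) := mul_le_mul_of_nonneg_left (hdiag.norm_repr_mul_le _ _) (norm_nonneg _)
    _ ≤ _ := Finset.le_sup' (fun j => ‖a j‖ * N (v j)) (Finset.mem_univ j)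

lemma iSup_norm_baseChange_repr_mul_le_sup' {J : Type*} [Fintype J] [Nonempty J]
    (hisom : ∀ x : K, ‖algebraMap K L x‖ = ‖x‖) {N : V → ℝ} (hN : ∀ v, 0 ≤ N v)
    {b : Module.Basis ι K V} (hdiag : IsDiagonalizableIn N b) (a : J → L) (v : J → V) :
    ⨆ i, ‖(b.baseChange L).repr (∑ j, a j ⊗ₜ[K] v j) i‖ * N (b i) ≤
      Finset.univ.sup' Finset.univ_nonempty fun j => ‖a j‖ * N (v j) := by
  refine Real.iSup_le (norm_baseChange_repr_mul_le_sup' hisom (fun i => hN _) hdiag a v) ?_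
  obtain ⟨j⟩ := ‹Nonempty J›
  exact Finset.le_sup'_of_le _ (Finset.mem_univ j) (mul_nonneg (norm_nonneg _) (hN _))

end

lemma exists_fin_succ_repr_sum_tmul {K L V : Type*} [CommSemiring K] [SeminormedRing L]
    [Algebra K L] [AddCommMonoid V] [Module K V] {N : V → ℝ} (hN : N 0 = 0) {d : ℕ} (c : Fin d → L)
    (e : Fin d → V) :
    ∃ (n : ℕ) (a : Fin (n + 1) → L) (v : Fin (n + 1) → V),
      ∑ i, c i ⊗ₜ[K] e i = ∑ j, a j ⊗ₜ[K] v j ∧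
      ⨆ i, ‖c i‖ * N (e i) = Finset.univ.sup' Finset.univ_nonempty fun j => ‖a j‖ * N (v j) := by
  cases d with
  | zero => exact ⟨0, 0, 0, by simp, by simp [hN]⟩
  | succ m => exact ⟨m, c, e, rfl, (Finset.sup'_univ_eq_ciSup _).symm⟩

theorem groundFieldExt_diagonalizable_general
    (K L V : Type*) [NormedField K]
    [NormedField L] [IsUltrametricDist L] [Algebra K L]
    (hisom : ∀ x : K, ‖algebraMap K L x‖ = ‖x‖)
    [AddCommGroup V] [Module K V]
    (N : V → ℝ) (hN : IsNAnorm K N)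
    (d : ℕ) (b : Module.Basis (Fin d) K V)
    (hdiag : ∀ a : Fin d → K, N (∑ i, a i • b i) = ⨆ i, ‖a i‖ * N (b i)) :
    ∀ c : Fin d → L,
      groundFieldExt K (L := L) N (∑ i, c i • ((1 : L) ⊗ₜ[K] b i)) =
        ⨆ i, ‖c i‖ * N (b i) := by
  intro c
  obtain ⟨hN_nonneg, hN_zero, -, -⟩ := hN
  have hw : ∑ i, c i • ((1 : L) ⊗ₜ[K] b i) = ∑ i, c i ⊗ₜ[K] b i := by
    simp [TensorProduct.smul_tmul']
  have hc : ∀ i, (b.baseChange L).repr (∑ i, c i ⊗ₜ[K] b i) i = c i := fun i => by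
    rw [b.baseChange_repr_sum_tmul]
    simp [Finsupp.single_apply]
  rw [hw]
  refine IsLeast.csInf_eq ⟨exists_fin_succ_repr_sum_tmul ((hN_zero 0).mpr rfl) c b, ?_⟩
  rintro r ⟨n, a, v, hrep, rfl⟩
  simpa only [← hrep, hc] using iSup_norm_baseChange_repr_mul_le_sup' hisom hN_nonneg hdiag a v

/-- The ground field extension of a norm diagonalizable in a basis `(e₁, …, e_d)` is
diagonalizable in the basis `(1⊗e₁, …, 1⊗e_d)`:
`N_L(Σᵢ cᵢ·(1⊗eᵢ)) = maxᵢ |cᵢ|·N(eᵢ)`. -/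
theorem groundFieldExt_diagonalizable
    (K L V : Type*) [NormedField K] [IsUltrametricDist K] [CompleteSpace K]
    [NormedField L] [IsUltrametricDist L] [CompleteSpace L] [Algebra K L]
    (hisom : ∀ x : K, ‖algebraMap K L x‖ = ‖x‖)
    [AddCommGroup V] [Module K V] [FiniteDimensional K V]
    (N : V → ℝ) (hN : IsNAnorm K N)
    (d : ℕ) (b : Module.Basis (Fin d) K V)
    (hdiag : ∀ a : Fin d → K, N (∑ i, a i • b i) = ⨆ i, ‖a i‖ * N (b i)) :
    ∀ c : Fin d → L,
      groundFieldExt K (L := L) N (∑ i, c i • ((1 : L) ⊗ₜ[K] b i)) =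
        ⨆ i, ‖c i‖ * N (b i) :=
  groundFieldExt_diagonalizable_general K L V hisom N hN d b hdiag
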